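/- Let Π be a HEF CNF theory. Then for every subset Π' ⊆ Π of its clauses and every set X of atoms, the projected theory Π'_X is HEF. -/

import Mathlib

structure Clause where
  head : Finset ℕ
  body : Finset ℕ
deriving DecidableEq

abbrev Theory := Finset Clause

/-- interpretation I satisfies clause c -/
def satC (I : Finset ℕ) (c : Clause) : Prop :=
  (c.head ∩ I).Nonempty ∨ ¬ c.body ⊆ I

def isModel (T : Theory) (I : Finset ℕ) : Prop := ∀ c ∈ T, satC I c

def isMinModel (T : Theory) (I : Finset ℕ) : Prop :=
  isModel T I ∧ ∀ J ⊂ I, ¬ isModel T J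

def Positive (T : Theory) : Prop := ∀ c ∈ T, c.head.Nonempty

def Horn (T : Theory) : Prop := ∀ c ∈ T, c.head.card = 1

/-- atoms occurring in a theory -/
def atoms (T : Theory) : Finset ℕ := T.biUnion (fun c => c.head ∪ c.body)

/-- c_{X←} : project head on X -/
def projHeadC (c : Clause) (X : Finset ℕ) : Clause := ⟨c.head ∩ X, c.body⟩
/-- c_X : project head and body on X -/
def projC (c : Clause) (X : Finset ℕ) : Clause := ⟨c.head ∩ X, c.body ∩ X⟩

/-- Π_{X←} -/
def projHeadT (T : Theory) (X : Finset ℕ) : Theory :=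
  (T.image (fun c => projHeadC c X)).filter (fun c => c.head.Nonempty)

/-- Π_X -/
def projT (T : Theory) (X : Finset ℕ) : Theory :=
  (T.image (fun c => projC c X)).filter (fun c => c.head.Nonempty)

/-- Π^{nd} : single-head fragment -/
def nd (T : Theory) : Theory := T.filter (fun c => c.head.card = 1)

/-- the steady set of M for Π is the minimal model of Π^{nd}_{M←} -/
def isSteady (T : Theory) (M S : Finset ℕ) : Prop :=
  isMinModel (nd (projHeadT T M)) S

def simpl (T : Theory) (M S : Finset ℕ) : Theory :=
  T.filter (fun c => c.head ∩ S = ∅ ∧ c.body ⊆ M)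

/-- simplified theory of Π w.r.t. M (with steady set S) -/
def simplT (T : Theory) (M S : Finset ℕ) : Theory := projT (simpl T M S) (M \ S)

/-- E erasable in M for T -/
def Erasable (T : Theory) (M E : Finset ℕ) : Prop :=
  E.Nonempty ∧ E ⊆ M ∧ isModel T (M \ E)

def Outbound (T : Theory) (Y Z : Finset ℕ) : Prop :=
  ∃ c ∈ T, (c.head ∩ Z).Nonempty ∧ (c.body ∩ (Y \ Z)).Nonempty ∧
    c.body ∩ Z = ∅ ∧ c.head ∩ (Y \ Z) = ∅

def Elementary (T : Theory) (Y : Finset ℕ) : Prop :=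
  Y.Nonempty ∧ Y ⊆ atoms T ∧ ∀ Z, Z ⊂ Y → Z.Nonempty → Outbound T Y Z

def HEF (T : Theory) : Prop :=
  ∀ c ∈ T, ∀ E, Elementary T E → (E ∩ c.head).card ≤ 1

def DisjunctiveSet (T : Theory) (S : Finset ℕ) : Prop :=
  ∃ c ∈ T, 1 < (c.head ∩ S).card

def SuperElementary (T : Theory) (X : Finset ℕ) : Prop :=
  Elementary T X ∧ ¬ Outbound T (atoms T) X

def posForm (T : Theory) (phi : ℕ) : Theory :=
  T.filter (fun c => c.head.Nonempty) ∪
  (T.filter (fun c => c.head = ∅)).image (fun c => ⟨{phi}, c.body⟩) ∪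
  (atoms T).image (fun a => ⟨{a}, {phi}⟩)

/-!
Elementary sets only grow with the theory, so HEF passes to subtheories. Every elementary set of
`Π_X` lies in `X` and is elementary for `Π`: an outbound witness in `Π_X` is the projection of a
clause of `Π`, which is a witness too because all the sets involved lie in `X`. Projection only
shrinks heads, so each head of `Π_X` meets such a set in at most one atom.
-/

lemma exists_projC_of_mem_projT {T : Theory} {X : Finset ℕ} {c : Clause} (hc : c ∈ projT T X) :
    ∃ c₀ ∈ T, projC c₀ X = c := by
  simp only [projT, Finset.mem_filter, Finset.mem_image] at hc
  exact hc.1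

lemma atoms_mono {T T' : Theory} (h : T ⊆ T') : atoms T ⊆ atoms T' :=
  Finset.biUnion_subset_biUnion_of_subset_left _ h

lemma atoms_projT_subset (T : Theory) (X : Finset ℕ) : atoms (projT T X) ⊆ atoms T ∩ X := by
  intro a ha
  obtain ⟨c, hc, hac⟩ := Finset.mem_biUnion.mp ha
  obtain ⟨c₀, hc₀, rfl⟩ := exists_projC_of_mem_projT hc
  have hacX : a ∈ (c₀.head ∪ c₀.body) ∩ X := by
    rwa [Finset.union_inter_distrib_right]
  exact Finset.mem_inter.mpr
    ⟨Finset.mem_biUnion.mpr ⟨c₀, hc₀, (Finset.mem_inter.mp hacX).1⟩, (Finset.mem_inter.mp hacX).2⟩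

lemma Outbound.mono {T T' : Theory} (h : T ⊆ T') {Y Z : Finset ℕ} (hout : Outbound T Y Z) :
    Outbound T' Y Z := by
  obtain ⟨c, hc, hout⟩ := hout
  exact ⟨c, h hc, hout⟩

lemma Outbound.of_projT {T : Theory} {X Y Z : Finset ℕ} (hY : Y ⊆ X) (hZ : Z ⊆ X)
    (hout : Outbound (projT T X) Y Z) : Outbound T Y Z := by
  obtain ⟨c, hc, hHeadZ, hBodyYZ, hBodyZ, hHeadYZ⟩ := hout
  obtain ⟨c₀, hc₀, rfl⟩ := exists_projC_of_mem_projT hc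
  simp only [projC, Finset.inter_assoc] at hHeadZ hBodyYZ hBodyZ hHeadYZ
  rw [Finset.inter_eq_right.mpr hZ] at hHeadZ hBodyZ
  rw [Finset.inter_eq_right.mpr (Finset.sdiff_subset.trans hY)] at hBodyYZ hHeadYZ
  exact ⟨c₀, hc₀, hHeadZ, hBodyYZ, hBodyZ, hHeadYZ⟩

lemma Elementary.mono {T T' : Theory} (h : T ⊆ T') {E : Finset ℕ} (hE : Elementary T E) :
    Elementary T' E :=
  ⟨hE.1, hE.2.1.trans (atoms_mono h), fun Z hZ hZne => (hE.2.2 Z hZ hZne).mono h⟩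

lemma Elementary.subset_of_projT {T : Theory} {X E : Finset ℕ}
    (hE : Elementary (projT T X) E) : E ⊆ X :=
  hE.2.1.trans ((atoms_projT_subset T X).trans Finset.inter_subset_right)

lemma Elementary.of_projT {T : Theory} {X E : Finset ℕ} (hE : Elementary (projT T X) E) :
    Elementary T E := by
  have hEX := hE.subset_of_projT
  refine ⟨hE.1, hE.2.1.trans ((atoms_projT_subset T X).trans Finset.inter_subset_left), ?_⟩
  exact fun Z hZ hZne => (hE.2.2 Z hZ hZne).of_projT hEX (hZ.1.trans hEX)

lemma HEF.anti {T T' : Theory} (hT : HEF T) (h : T' ⊆ T) : HEF T' :=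
  fun c hc E hE => hT c (h hc) E (hE.mono h)

lemma HEF.projT {T : Theory} (hT : HEF T) (X : Finset ℕ) : HEF (projT T X) := by
  intro c hc E hE
  obtain ⟨c₀, hc₀, rfl⟩ := exists_projC_of_mem_projT hc
  calc (E ∩ (c₀.head ∩ X)).card ≤ (E ∩ c₀.head).card :=
        Finset.card_le_card (Finset.inter_subset_inter_left Finset.inter_subset_left)
    _ ≤ 1 := hT c₀ hc₀ E hE.of_projT

theorem stmt7 (T : Theory) (hHEF : HEF T) :
    ∀ T' ⊆ T, ∀ X : Finset ℕ, HEF (projT T' X) :=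
  fun _ hT' X => (hHEF.anti hT').projT X
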